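/- Let G be a finite abelian group isomorphic to ℤ_{n_1} ⊕ … ⊕ ℤ_{n_k}, where k ≥ 1, each n_i ≥ 2, and n_{i+1} divides n_i for all 1 ≤ i ≤ k−1. Then G is N_{2,1}-capable if and only if k ≥ 2 and n_1 = n_2. -/

import Mathlib

/-- The commutator `[a,b] = a⁻¹ * b⁻¹ * a * b`. -/
def pcomm {E : Type} [Group E] (a b : E) : E := a⁻¹ * b⁻¹ * a * b

/-- The word `v(x₁,…,x₆) = [[[x₁,x₂],x₃],[[x₄,x₅],x₆]]` defining the polynilpotent
variety `N_{2,1}`. -/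
def n21W {E : Type} [Group E] (g : Fin 6 → E) : E :=
  pcomm (pcomm (pcomm (g 0) (g 1)) (g 2)) (pcomm (pcomm (g 3) (g 4)) (g 5))

/-- The marginal set of a group `E` with respect to the variety `N_{2,1}`: all `a ∈ E`
such that for all `g₁,…,g₆ ∈ E` and every index `i`, replacing `gᵢ` by `gᵢ * a`
leaves the value of `v` unchanged. -/
def n21MarginalSet (E : Type) [Group E] : Set E :=
  {a : E | ∀ (g : Fin 6 → E) (i : Fin 6),
    n21W (Function.update g i (g i * a)) = n21W g}

/-- `G` is `N_{2,1}`-capable if `G ≅ E / V*(E)` for some group `E`, where `V*(E)` is the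
marginal (normal) subgroup of `E` with respect to the variety `N_{2,1}`, i.e. the normal
subgroup whose underlying set is `n21MarginalSet E`. -/
def IsN21Capable (G : Type) [Group G] : Prop :=
  ∃ (E : Type) (_ : Group E) (H : Subgroup E) (_ : H.Normal),
    (H : Set E) = n21MarginalSet E ∧ Nonempty (G ≃* E ⧸ H)


/-!
If `G ≅ E / V*(E)` is abelian, then `E' ≤ V*(E)`. Hence `v` only depends on its arguments
modulo `V*(E)`; in particular conjugating an argument does not change it, so its values are
central and it is a homomorphism in each argument. Let `x` lift the generator of the first
summand and let `n c ∣ m` for all other summands. Write a neighbouring argument (slots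
`0 ↔ 1`, `3 ↔ 4`; slot `2` via `0` and `1`, slot `5` via `3` and `4`) as `x ^ a * z` with
`z ^ m ∈ V*(E)`: then `v (…, x, …) ^ m` splits into a value with an inner commutator `[x, x]`
and an `m`-th power of a value at `z`, both trivial. So `x ^ m ∈ V*(E)`, i.e. `n₁ ∣ m`;
`m = n₂` gives `n₁ = n₂`, and `m = 1` rules out `k = 1`.

Conversely, pick `τ c ≠ c` with `n c ∣ n (τ c)`, possible once `n₁ = n₂`. Let `E` consist of
the pairs `(ξ, x)`, `ξ ∈ ∏ ZMod (n c)` and `x` unitriangular `7 × 7` over `∏ ZMod (n c)`, such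
that in the factor `c` the superdiagonal of `x` is `(ξ c, ξ (τ c), ξ (τ c), ξ (τ c), ξ c, ξ c)`.
As `v` has weight `6` and `UT₇` has class `6`, `v (x₁, …, x₆) - 1` is the Lie word
`[[[X₁, X₂], X₃], [[X₄, X₅], X₆]]` in the leading terms `Xᵢ` of `xᵢ - 1`, so it only depends on
superdiagonals: the pairs with `ξ = 0` are marginal. Testing a marginal `(ξ, x)` against the
lifts of `e (τ c), e (τ c), e (τ c), e c, e c` leaves the corner entry `ξ c` in the factor `c`,
so `ξ = 0`, and `E / V*(E) ≅ ∏ ZMod (n c)`.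
-/

lemma eq_vec6 {α : Type*} (g : Fin 6 → α) : g = ![g 0, g 1, g 2, g 3, g 4, g 5] := by
  funext i; fin_cases i <;> rfl

abbrev ZModPi {ι : Type} (n : ι → ℕ) : Type := ∀ c, ZMod (n c)

section Commutator

variable {E : Type} [Group E]

@[simp] lemma pcomm_self (a : E) : pcomm a a = 1 := by simp [pcomm]

@[simp] lemma one_pcomm (a : E) : pcomm 1 a = 1 := by simp [pcomm]

@[simp] lemma pcomm_one (a : E) : pcomm a 1 = 1 := by simp [pcomm]

lemma Commute.pcomm_eq_one {a b : E} (h : Commute a b) : pcomm a b = 1 := by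
  simp [pcomm, mul_assoc, h.eq]

lemma conj_pcomm (t a b : E) :
    t⁻¹ * pcomm a b * t = pcomm (t⁻¹ * a * t) (t⁻¹ * b * t) := by
  simp only [pcomm]; group

lemma pcomm_mul_left (a b c : E) :
    pcomm (a * b) c = pcomm (b⁻¹ * a * b) (b⁻¹ * c * b) * pcomm b c := by
  simp only [pcomm]; group

lemma pcomm_mul_right (a b c : E) : pcomm a (b * c) = pcomm a b * pcomm (b⁻¹ * a * b) c := by
  simp only [pcomm]; group

lemma map_pcomm {F : Type} [Group F] (f : E →* F) (a b : E) :
    f (pcomm a b) = pcomm (f a) (f b) := by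
  simp only [pcomm, map_mul, map_inv]

lemma map_n21W {F : Type} [Group F] (f : E →* F) (g : Fin 6 → E) :
    f (n21W g) = n21W (f ∘ g) := by
  simp only [n21W, map_pcomm, Function.comp]

lemma n21W_eq_one {A : Type} [CommGroup A] (g : Fin 6 → A) : n21W g = 1 :=
  (Commute.all _ _).pcomm_eq_one

lemma n21W_eq_one_of_eq01 {g : Fin 6 → E} (h : g 0 = g 1) : n21W g = 1 := by
  simp [n21W, h]

lemma n21W_eq_one_of_eq34 {g : Fin 6 → E} (h : g 3 = g 4) : n21W g = 1 := by
  simp [n21W, h]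

lemma conj_n21W (t : E) (g : Fin 6 → E) :
    t⁻¹ * n21W g * t = n21W (fun i => t⁻¹ * g i * t) := by
  simp only [n21W, conj_pcomm]

def pcomm3 (a b c : E) : E := pcomm (pcomm a b) c

lemma n21W_vec (a b c d e f : E) :
    n21W ![a, b, c, d, e, f] = pcomm (pcomm3 a b c) (pcomm3 d e f) := rfl

lemma conj_pcomm3 (t a b c : E) :
    t⁻¹ * pcomm3 a b c * t = pcomm3 (t⁻¹ * a * t) (t⁻¹ * b * t) (t⁻¹ * c * t) := by
  simp only [pcomm3, conj_pcomm]

lemma pcomm3_mul_left (u w b c : E) :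
    pcomm3 (u * w) b c = pcomm3 ((pcomm w b)⁻¹ * (w⁻¹ * u * w) * pcomm w b)
      ((pcomm w b)⁻¹ * (w⁻¹ * b * w) * pcomm w b) ((pcomm w b)⁻¹ * c * pcomm w b) *
      pcomm3 w b c := by
  simp only [pcomm3, pcomm]; group

lemma pcomm3_mul_mid (a u w c : E) :
    pcomm3 a (u * w) c = pcomm3 ((pcomm (u⁻¹ * a * u) w)⁻¹ * a * pcomm (u⁻¹ * a * u) w)
      ((pcomm (u⁻¹ * a * u) w)⁻¹ * u * pcomm (u⁻¹ * a * u) w)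
      ((pcomm (u⁻¹ * a * u) w)⁻¹ * c * pcomm (u⁻¹ * a * u) w) *
      pcomm3 (u⁻¹ * a * u) w c := by
  simp only [pcomm3, pcomm]; group

lemma pcomm3_mul_right (a b u w : E) :
    pcomm3 a b (u * w) = pcomm3 a b u * pcomm3 (u⁻¹ * a * u) (u⁻¹ * b * u) w := by
  simp only [pcomm3, pcomm]; group

lemma pcomm_mem_of_commute_quotient {H : Subgroup E} [H.Normal]
    (h : ∀ a b : E ⧸ H, Commute a b) (x y : E) : pcomm x y ∈ H := by
  rw [← QuotientGroup.eq_one_iff, ← QuotientGroup.mk'_apply, map_pcomm]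
  exact (h _ _).pcomm_eq_one

end Commutator

def n21Marginal (E : Type) [Group E] : Subgroup E where
  carrier := n21MarginalSet E
  one_mem' g i := by simp
  mul_mem' {a b} ha hb g i := by
    have h := hb (Function.update g i (g i * a)) i
    rw [Function.update_self, Function.update_idem] at h
    rw [← mul_assoc, h, ha]
  inv_mem' {a} ha g i := by
    have h := ha (Function.update g i (g i * a⁻¹)) i
    rw [Function.update_self, Function.update_idem, inv_mul_cancel_right,
      Function.update_eq_self] at h
    exact h.symm

section Marginal

variable {E : Type} [Group E]

lemma n21W_congr {g g' : Fin 6 → E} (h : ∀ i, (g i : E ⧸ n21Marginal E) = g' i) :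
    n21W g = n21W g' := by
  suffices ∀ s : Finset (Fin 6), n21W g = n21W (s.piecewise g' g) by
    simpa using this Finset.univ
  intro s
  induction s using Finset.induction_on with
  | empty => simp
  | insert j s hj ih =>
    have hmem : (g j)⁻¹ * g' j ∈ n21Marginal E := QuotientGroup.eq.mp (h j)
    have := hmem (s.piecewise g' g) j
    rw [Finset.piecewise_eq_of_notMem _ _ _ hj, mul_inv_cancel_left] at this
    rw [Finset.piecewise_insert, ih, this]

lemma n21Marginal_mk_conj (hcomm : ∀ x y : E, pcomm x y ∈ n21Marginal E) (t x : E) :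
    ((t⁻¹ * x * t : E) : E ⧸ n21Marginal E) = x := by
  rw [QuotientGroup.eq]
  simpa [pcomm, mul_assoc] using hcomm t x

lemma n21W_commute (hcomm : ∀ x y : E, pcomm x y ∈ n21Marginal E) (g : Fin 6 → E) (t : E) :
    Commute (n21W g) t := by
  have h : t⁻¹ * n21W g * t = n21W g := by
    rw [conj_n21W]
    exact n21W_congr fun i => n21Marginal_mk_conj hcomm t (g i)
  calc n21W g * t = t * (t⁻¹ * n21W g * t) := by group
    _ = t * n21W g := by rw [h]

lemma n21W_mul_slot0 (hcomm : ∀ x y : E, pcomm x y ∈ n21Marginal E) (u w b c d e f : E) :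
    n21W ![u * w, b, c, d, e, f] = n21W ![u, b, c, d, e, f] * n21W ![w, b, c, d, e, f] := by
  rw [n21W_vec, pcomm3_mul_left, pcomm_mul_left, conj_pcomm3, conj_pcomm3, ← n21W_vec,
    ← n21W_vec]
  congr 1
  exact n21W_congr (by intro i; fin_cases i <;> simp [n21Marginal_mk_conj hcomm])

lemma n21W_mul_slot1 (hcomm : ∀ x y : E, pcomm x y ∈ n21Marginal E) (a u w c d e f : E) :
    n21W ![a, u * w, c, d, e, f] = n21W ![a, u, c, d, e, f] * n21W ![a, w, c, d, e, f] := by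
  rw [n21W_vec, pcomm3_mul_mid, pcomm_mul_left, conj_pcomm3, conj_pcomm3, ← n21W_vec,
    ← n21W_vec]
  congr 1 <;> exact n21W_congr (by intro i; fin_cases i <;> simp [n21Marginal_mk_conj hcomm])

lemma n21W_mul_slot2 (hcomm : ∀ x y : E, pcomm x y ∈ n21Marginal E) (a b u w d e f : E) :
    n21W ![a, b, u * w, d, e, f] = n21W ![a, b, u, d, e, f] * n21W ![a, b, w, d, e, f] := by
  rw [n21W_vec, pcomm3_mul_right, pcomm_mul_left, conj_pcomm3, conj_pcomm3, ← n21W_vec,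
    ← n21W_vec]
  congr 1 <;> exact n21W_congr (by intro i; fin_cases i <;> simp [n21Marginal_mk_conj hcomm])

lemma n21W_mul_slot3 (hcomm : ∀ x y : E, pcomm x y ∈ n21Marginal E) (a b c u w e f : E) :
    n21W ![a, b, c, u * w, e, f] = n21W ![a, b, c, u, e, f] * n21W ![a, b, c, w, e, f] := by
  rw [n21W_vec, pcomm3_mul_left, pcomm_mul_right, conj_pcomm3, ← n21W_vec, ← n21W_vec]
  congr 1 <;> exact n21W_congr (by intro i; fin_cases i <;> simp [n21Marginal_mk_conj hcomm])

lemma n21W_mul_slot4 (hcomm : ∀ x y : E, pcomm x y ∈ n21Marginal E) (a b c d u w f : E) :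
    n21W ![a, b, c, d, u * w, f] = n21W ![a, b, c, d, u, f] * n21W ![a, b, c, d, w, f] := by
  rw [n21W_vec, pcomm3_mul_mid, pcomm_mul_right, conj_pcomm3, ← n21W_vec, ← n21W_vec]
  congr 1 <;> exact n21W_congr (by intro i; fin_cases i <;> simp [n21Marginal_mk_conj hcomm])

lemma n21W_mul_slot5 (hcomm : ∀ x y : E, pcomm x y ∈ n21Marginal E) (a b c d e u w : E) :
    n21W ![a, b, c, d, e, u * w] = n21W ![a, b, c, d, e, u] * n21W ![a, b, c, d, e, w] := by
  rw [n21W_vec, pcomm3_mul_right, pcomm_mul_right, conj_pcomm3, ← n21W_vec, ← n21W_vec]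
  congr 1
  exact n21W_congr (by intro i; fin_cases i <;> simp [n21Marginal_mk_conj hcomm])

lemma n21W_update_mul (hcomm : ∀ x y : E, pcomm x y ∈ n21Marginal E) (g : Fin 6 → E)
    (i : Fin 6) (u w : E) :
    n21W (Function.update g i (u * w)) =
      n21W (Function.update g i u) * n21W (Function.update g i w) := by
  rw [eq_vec6 (Function.update g i (u * w)), eq_vec6 (Function.update g i u),
    eq_vec6 (Function.update g i w)]
  fin_cases i <;> simp
  · exact n21W_mul_slot0 hcomm ..
  · exact n21W_mul_slot1 hcomm ..
  · exact n21W_mul_slot2 hcomm ..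
  · exact n21W_mul_slot3 hcomm ..
  · exact n21W_mul_slot4 hcomm ..
  · exact n21W_mul_slot5 hcomm ..

def n21WSlotHom (hcomm : ∀ x y : E, pcomm x y ∈ n21Marginal E) (g : Fin 6 → E) (i : Fin 6) :
    E →* E :=
  MonoidHom.mk' (fun x => n21W (Function.update g i x)) (n21W_update_mul hcomm g i)

lemma n21WSlotHom_apply (hcomm : ∀ x y : E, pcomm x y ∈ n21Marginal E) (g : Fin 6 → E)
    (i : Fin 6) (x : E) : n21WSlotHom hcomm g i x = n21W (Function.update g i x) := rfl

lemma n21W_pow_eq_one_of_update (hcomm : ∀ x y : E, pcomm x y ∈ n21Marginal E) {x : E} {m : ℕ}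
    (hsplit : ∀ y : E, ∃ (a : ℤ) (z : E),
      z ^ m ∈ n21Marginal E ∧ (y : E ⧸ n21Marginal E) = ↑(x ^ a * z))
    (h : Fin 6 → E) (j : Fin 6) (hx : n21W (Function.update h j x) ^ m = 1) :
    n21W h ^ m = 1 := by
  obtain ⟨a, z, hz, hy⟩ := hsplit (h j)
  set φ := n21WSlotHom hcomm h j
  have hφ : ∀ y, φ y = n21W (Function.update h j y) := n21WSlotHom_apply hcomm h j
  have hφz : φ (z ^ m) = 1 := by
    rw [← map_one φ, hφ, hφ]
    refine n21W_congr fun i => ?_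
    rcases eq_or_ne i j with rfl | hi
    · simpa [QuotientGroup.eq] using hz
    · simp [Function.update_of_ne hi]
  have hvh : n21W h = φ (x ^ a * z) := by
    rw [hφ]
    conv_lhs => rw [← Function.update_eq_self j h]
    refine n21W_congr fun i => ?_
    rcases eq_or_ne i j with rfl | hi
    · simpa using hy
    · simp [Function.update_of_ne hi]
  have hc : Commute (φ (x ^ a)) (φ z) := n21W_commute hcomm _ _
  rw [hvh, map_mul, hc.mul_pow, map_zpow, ← map_pow, hφz, mul_one, ← zpow_natCast,
    ← zpow_mul, mul_comm, zpow_mul, zpow_natCast, hφ, hx, one_zpow]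

lemma pow_mem_n21Marginal (hcomm : ∀ x y : E, pcomm x y ∈ n21Marginal E) {x : E} {m : ℕ}
    (hsplit : ∀ y : E, ∃ (a : ℤ) (z : E),
      z ^ m ∈ n21Marginal E ∧ (y : E ⧸ n21Marginal E) = ↑(x ^ a * z)) :
    x ^ m ∈ n21Marginal E := by
  intro g i
  have step := n21W_pow_eq_one_of_update hcomm hsplit
  have hslot : n21W (Function.update g i x) ^ m = 1 := by
    fin_cases i
    · exact step _ 1 (by rw [n21W_eq_one_of_eq01 (by simp), one_pow])
    · exact step _ 0 (by rw [n21W_eq_one_of_eq01 (by simp), one_pow])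
    · exact step _ 0 (step _ 1 (by rw [n21W_eq_one_of_eq01 (by simp), one_pow]))
    · exact step _ 4 (by rw [n21W_eq_one_of_eq34 (by simp), one_pow])
    · exact step _ 3 (by rw [n21W_eq_one_of_eq34 (by simp), one_pow])
    · exact step _ 3 (step _ 4 (by rw [n21W_eq_one_of_eq34 (by simp), one_pow]))
  have hφ := map_mul (n21WSlotHom hcomm g i) (g i) (x ^ m)
  rw [map_pow, n21WSlotHom_apply, n21WSlotHom_apply, n21WSlotHom_apply,
    Function.update_eq_self] at hφ
  rw [hφ, hslot, mul_one]

end Marginal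

lemma exists_eq_zsmul_single_add {ι : Type} [DecidableEq ι] {n : ι → ℕ} (c₀ : ι) {m : ℕ}
    (hm : ∀ c, c ≠ c₀ → n c ∣ m) (ξ : ZModPi n) :
    ∃ (a : ℤ) (η : ZModPi n), m • η = 0 ∧ ξ = a • Pi.single c₀ 1 + η := by
  refine ⟨(ξ c₀).cast, ξ - Pi.single c₀ (ξ c₀), funext fun c => ?_, funext fun c => ?_⟩
    <;> rcases eq_or_ne c c₀ with rfl | hc
  · simp
  · simp [hc, (ZMod.natCast_eq_zero_iff _ _).mpr (hm c hc)]
  · simp [-ZMod.intCast_cast, ZMod.intCast_zmod_cast]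
  · simp [hc]

theorem dvd_of_isN21Capable_pi {ι : Type} {n : ι → ℕ}
    (hcap : IsN21Capable (Multiplicative (ZModPi n))) (c₀ : ι) {m : ℕ}
    (hm : ∀ c, c ≠ c₀ → n c ∣ m) : n c₀ ∣ m := by
  classical
  obtain ⟨E, _, H, _, hH, ⟨μ⟩⟩ := hcap
  obtain rfl : H = n21Marginal E := SetLike.coe_injective hH
  have hcomm : ∀ x y : E, pcomm x y ∈ n21Marginal E := pcomm_mem_of_commute_quotient
    fun a b => μ.symm.injective (by rw [map_mul, map_mul, mul_comm])
  obtain ⟨x, hx⟩ := QuotientGroup.mk_surjective (μ (.ofAdd (Pi.single c₀ 1)))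
  have hxm : x ^ m ∈ n21Marginal E := by
    refine pow_mem_n21Marginal hcomm fun y => ?_
    obtain ⟨a, η, hη, hξ⟩ := exists_eq_zsmul_single_add c₀ hm (μ.symm y).toAdd
    obtain ⟨z, hz⟩ := QuotientGroup.mk_surjective (μ (.ofAdd η))
    refine ⟨a, z, ?_, ?_⟩
    · rw [← QuotientGroup.eq_one_iff, QuotientGroup.mk_pow, hz, ← map_pow, ← ofAdd_nsmul,
        hη, ofAdd_zero, map_one]
    · rw [QuotientGroup.mk_mul, QuotientGroup.mk_zpow, hx, hz, ← map_zpow, ← map_mul,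
        ← ofAdd_zsmul, ← ofAdd_add, ← hξ, ofAdd_toAdd, μ.apply_symm_apply]
  have hμ : μ (.ofAdd (m • Pi.single c₀ 1)) = μ 1 := by
    rw [ofAdd_nsmul, map_pow, ← hx, ← QuotientGroup.mk_pow, map_one, QuotientGroup.eq_one_iff]
    exact hxm
  have := congrFun (Multiplicative.ofAdd.injective (μ.injective hμ)) c₀
  simpa [ZMod.natCast_eq_zero_iff] using this

section Filtration

variable {R : Type} [CommRing R] {m : ℕ}

def DegreeGe (a : ℕ) (A : Matrix (Fin m) (Fin m) R) : Prop :=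
  ∀ i j : Fin m, (j : ℕ) < i + a → A i j = 0

lemma degreeGe_zero_one : DegreeGe 0 (1 : Matrix (Fin m) (Fin m) R) :=
  fun _ _ hij => Matrix.one_apply_ne (Fin.ne_of_val_ne (by omega))

namespace DegreeGe

variable {a b : ℕ} {A B : Matrix (Fin m) (Fin m) R}

lemma mono {a' : ℕ} (hA : DegreeGe a A) (h : a' ≤ a) : DegreeGe a' A :=
  fun i j hij => hA i j (by omega)

lemma add (hA : DegreeGe a A) (hB : DegreeGe a B) : DegreeGe a (A + B) :=
  fun i j hij => by simp [hA i j hij, hB i j hij]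

lemma neg (hA : DegreeGe a A) : DegreeGe a (-A) :=
  fun i j hij => by simp [hA i j hij]

lemma sub (hA : DegreeGe a A) (hB : DegreeGe a B) : DegreeGe a (A - B) := by
  simpa [sub_eq_add_neg] using hA.add hB.neg

lemma mul (hA : DegreeGe a A) (hB : DegreeGe b B) : DegreeGe (a + b) (A * B) := by
  intro i j hij
  rw [Matrix.mul_apply]
  refine Finset.sum_eq_zero fun l _ => ?_
  by_cases hl : (l : ℕ) < i + a
  · rw [hA i l hl, zero_mul]
  · rw [hB l j (by omega), mul_zero]

lemma lie (hA : DegreeGe a A) (hB : DegreeGe b B) : DegreeGe (a + b) ⁅A, B⁆ := by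
  rw [Ring.lie_def]
  exact (hA.mul hB).sub ((hB.mul hA).mono (by omega))

lemma pow (hA : DegreeGe 1 A) (k : ℕ) : DegreeGe k (A ^ k) := by
  induction k with
  | zero => exact degreeGe_zero_one
  | succ k ih => rw [pow_succ]; exact ih.mul hA

lemma eq_zero (hA : DegreeGe m A) : A = 0 := by
  ext i j
  exact hA i j (by omega)

lemma mul_apply (hA : DegreeGe a A) (hB : DegreeGe b B) {i j l : Fin m}
    (hj : (j : ℕ) = i + a) (hl : (l : ℕ) = j + b) : (A * B) i l = A i j * B j l := by
  rw [Matrix.mul_apply, Finset.sum_eq_single j]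
  · intro k _ hk
    rcases lt_or_gt_of_ne (Fin.val_ne_of_ne hk) with h | h
    · rw [hA i k (by omega), zero_mul]
    · rw [hB k l (by omega), mul_zero]
  · simp

lemma blockTriangular (hA : DegreeGe 0 A) : A.BlockTriangular id :=
  fun i j hij => hA i j (by simpa using hij)

end DegreeGe

lemma degreeGe_zero_of_sub_one {x : Matrix (Fin m) (Fin m) R} (hx : DegreeGe 1 (x - 1)) :
    DegreeGe 0 x := by
  simpa using (hx.mono zero_le_one).add degreeGe_zero_one

lemma degreeGe_zero_inv {x : GL (Fin m) R} (hx : DegreeGe 0 x.val) :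
    DegreeGe 0 (x⁻¹).val := by
  let _ := x.invertible
  intro i j hij
  rw [Matrix.coe_units_inv]
  exact Matrix.blockTriangular_inv_of_blockTriangular hx.blockTriangular (by simpa using hij)

lemma degreeGe_inv_sub_one {a : ℕ} {x : GL (Fin m) R} (hx : DegreeGe a (x.val - 1))
    (ha : 1 ≤ a) : DegreeGe a ((x⁻¹).val - 1) := by
  have hinv := degreeGe_zero_inv (degreeGe_zero_of_sub_one (hx.mono ha))
  have h : (x⁻¹).val - 1 = -((x⁻¹).val * (x.val - 1)) := by
    rw [mul_sub, mul_one, Units.inv_mul]; abel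
  rw [h]
  simpa using (hinv.mul hx).neg

lemma val_mul_sub_one (x y : GL (Fin m) R) :
    (x * y).val - 1 =
      (x.val - 1) * (y.val - 1) + (x.val - 1) + (y.val - 1) := by
  rw [Units.val_mul]; noncomm_ring

def IsLeadingTerm (a : ℕ) (x : GL (Fin m) R) (A : Matrix (Fin m) (Fin m) R) : Prop :=
  DegreeGe a A ∧ DegreeGe (a + 1) (x.val - 1 - A)

lemma IsLeadingTerm.degreeGe_sub_one {a : ℕ} {x : GL (Fin m) R} {A : Matrix (Fin m) (Fin m) R}
    (h : IsLeadingTerm a x A) : DegreeGe a (x.val - 1) := by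
  simpa using h.1.add (h.2.mono (Nat.le_succ a))

lemma isLeadingTerm_self {x : GL (Fin m) R} (hx : DegreeGe 1 (x.val - 1)) :
    IsLeadingTerm 1 x (x.val - 1) :=
  ⟨hx, fun i j _ => by simp⟩

lemma isLeadingTerm_mul {x δ : GL (Fin m) R} (hx : DegreeGe 1 (x.val - 1))
    (hδ : DegreeGe 2 (δ.val - 1)) : IsLeadingTerm 1 (x * δ) (x.val - 1) := by
  refine ⟨hx, ?_⟩
  have e : (x * δ).val - 1 - (x.val - 1) = x.val * (δ.val - 1) := by
    rw [Units.val_mul]; noncomm_ring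
  rw [e]
  exact (degreeGe_zero_of_sub_one hx).mul hδ

lemma isLeadingTerm_pcomm {a b : ℕ} {x y : GL (Fin m) R} {A B : Matrix (Fin m) (Fin m) R}
    (ha : 1 ≤ a) (hb : 1 ≤ b) (hx : IsLeadingTerm a x A) (hy : IsLeadingTerm b y B) :
    IsLeadingTerm (a + b) (pcomm x y) ⁅A, B⁆ := by
  set X := x.val - 1
  set Y := y.val - 1
  have hX : DegreeGe a X := hx.degreeGe_sub_one
  have hY : DegreeGe b Y := hy.degreeGe_sub_one
  have hP : DegreeGe 1 ((x⁻¹ * y⁻¹).val - 1) := by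
    have hx' := (degreeGe_inv_sub_one hX ha).mono ha
    have hy' := (degreeGe_inv_sub_one hY hb).mono hb
    rw [val_mul_sub_one]
    exact ((hx'.mul hy').mono (by omega)).add hx' |>.add hy'
  have hval : (pcomm x y).val - 1 =
      (x⁻¹ * y⁻¹).val * ⁅X, Y⁆ := by
    have h1 : (x⁻¹ * y⁻¹).val * (y.val * x) = 1 := by
      simp only [← Units.val_mul, mul_assoc, inv_mul_cancel_left, inv_mul_cancel, Units.val_one]
    have h0 : (pcomm x y).val = (x⁻¹ * y⁻¹).val * (x.val * y.val) := by
      simp only [pcomm, Units.val_mul, mul_assoc]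
    rw [h0, ← h1, ← mul_sub]
    congr 1
    simp only [X, Y, Ring.lie_def]
    noncomm_ring
  refine ⟨hx.1.lie hy.1, ?_⟩
  have e : (pcomm x y).val - 1 - ⁅A, B⁆ =
      ((x⁻¹ * y⁻¹).val - 1) * ⁅X, Y⁆ + ⁅X - A, Y⁆ + ⁅A, Y - B⁆ := by
    rw [hval]; simp only [Ring.lie_def]; noncomm_ring
  rw [e]
  exact (((hP.mul (hX.lie hY)).mono (by omega)).add ((hx.2.lie hY).mono (by omega))).add
    ((hx.1.lie hy.2).mono (by omega))

def n21Lie {L : Type} [Bracket L L] (A : Fin 6 → L) : L :=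
  ⁅⁅⁅A 0, A 1⁆, A 2⁆, ⁅⁅A 3, A 4⁆, A 5⁆⁆

lemma isLeadingTerm_n21W {g : Fin 6 → GL (Fin m) R} {A : Fin 6 → Matrix (Fin m) (Fin m) R}
    (h : ∀ i, IsLeadingTerm 1 (g i) (A i)) : IsLeadingTerm 6 (n21W g) (n21Lie A) := by
  have inner i j k : IsLeadingTerm 3 (pcomm (pcomm (g i) (g j)) (g k)) ⁅⁅A i, A j⁆, A k⁆ :=
    isLeadingTerm_pcomm (by norm_num) le_rfl (isLeadingTerm_pcomm le_rfl le_rfl (h i) (h j)) (h k)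
  exact isLeadingTerm_pcomm (by norm_num) (by norm_num) (inner 0 1 2) (inner 3 4 5)

lemma lie_lie_apply {A B C : Matrix (Fin m) (Fin m) R} (hA : DegreeGe 1 A) (hB : DegreeGe 1 B)
    (hC : DegreeGe 1 C) {i j k l : Fin m} (hj : (j : ℕ) = i + 1) (hk : (k : ℕ) = j + 1)
    (hl : (l : ℕ) = k + 1) :
    ⁅⁅A, B⁆, C⁆ i l =
      (A i j * B j k - B i j * A j k) * C k l - C i j * (A j k * B k l - B j k * A k l) := by
  have hAB {i' j' k' : Fin m} (h : (j' : ℕ) = i' + 1) (h' : (k' : ℕ) = j' + 1) :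
      ⁅A, B⁆ i' k' = A i' j' * B j' k' - B i' j' * A j' k' := by
    rw [Ring.lie_def, Matrix.sub_apply, hA.mul_apply hB h h', hB.mul_apply hA h h']
  rw [Ring.lie_def, Matrix.sub_apply, (hA.lie hB).mul_apply hC (by omega) hl,
    hC.mul_apply (hA.lie hB) hj (by omega), hAB hj hk, hAB hk hl]

lemma lie_apply_of_degreeGe_three {P Q : Matrix (Fin m) (Fin m) R} (hP : DegreeGe 3 P)
    (hQ : DegreeGe 3 Q) {i j l : Fin m} (hj : (j : ℕ) = i + 3) (hl : (l : ℕ) = j + 3) :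
    ⁅P, Q⁆ i l = P i j * Q j l - Q i j * P j l := by
  rw [Ring.lie_def, Matrix.sub_apply, hP.mul_apply hQ hj hl, hQ.mul_apply hP hj hl]

end Filtration

section Unitriangular

variable {R : Type} [CommRing R] {m : ℕ}

lemma val_n21W {g : Fin 6 → GL (Fin 7) R} {A : Fin 6 → Matrix (Fin 7) (Fin 7) R}
    (h : ∀ i, IsLeadingTerm 1 (g i) (A i)) :
    (n21W g).val = 1 + n21Lie A := by
  have := ((isLeadingTerm_n21W h).2 : DegreeGe 7 _).eq_zero
  rwa [sub_sub, sub_eq_zero] at this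

def superdiag : Matrix (Fin (m + 1)) (Fin (m + 1)) R →+ (Fin m → R) where
  toFun A p := A p.castSucc p.succ
  map_zero' := rfl
  map_add' _ _ := rfl

@[simp] lemma superdiag_apply (A : Matrix (Fin (m + 1)) (Fin (m + 1)) R) (p : Fin m) :
    superdiag A p = A p.castSucc p.succ := rfl

lemma superdiag_eq_zero {A : Matrix (Fin (m + 1)) (Fin (m + 1)) R} (hA : DegreeGe 2 A) :
    superdiag A = 0 :=
  funext fun _ => hA _ _ (by simp)

lemma degreeGe_two_of_superdiag_eq_zero {A : Matrix (Fin (m + 1)) (Fin (m + 1)) R}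
    (hA : DegreeGe 1 A) (h : superdiag A = 0) : DegreeGe 2 A := by
  intro i j hij
  rcases lt_or_eq_of_le (Nat.le_of_lt_succ hij) with hij | hij
  · exact hA i j hij
  · have hi : (i : ℕ) < m := by omega
    have := congrFun h ⟨i, hi⟩
    rwa [superdiag_apply, show Fin.castSucc ⟨i, hi⟩ = i from rfl,
      show Fin.succ ⟨i, hi⟩ = j from Fin.ext (by simp; omega)] at this

def ofSuperdiag (v : Fin m → R) : Matrix (Fin (m + 1)) (Fin (m + 1)) R :=
  Matrix.of fun i j => if h : (j : ℕ) = i + 1 then v ⟨i, by omega⟩ else 0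

lemma degreeGe_ofSuperdiag (v : Fin m → R) : DegreeGe 1 (ofSuperdiag v) :=
  fun i j hij => by simp [ofSuperdiag]; omega

lemma superdiag_ofSuperdiag (v : Fin m → R) : superdiag (ofSuperdiag v) = v := by
  funext p
  simp [ofSuperdiag]

variable (R m) in
def unitriangular : Subgroup (GL (Fin m) R) where
  carrier := {x | DegreeGe 1 (x.val - 1)}
  one_mem' _ _ _ := by simp
  mul_mem' {x y} hx hy := by
    simp only [Set.mem_ofPred_eq, val_mul_sub_one]
    exact (((hx : DegreeGe 1 _).mul hy).mono (by norm_num)).add hx |>.add hy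
  inv_mem' hx := degreeGe_inv_sub_one hx le_rfl

lemma mem_unitriangular {x : GL (Fin m) R} :
    x ∈ unitriangular R m ↔ DegreeGe 1 (x.val - 1) := Iff.rfl

lemma isUnit_one_add_ofSuperdiag (v : Fin m → R) : IsUnit (1 + ofSuperdiag v) :=
  IsNilpotent.isUnit_one_add ⟨m + 1, ((degreeGe_ofSuperdiag v).pow (m + 1)).eq_zero⟩

noncomputable def unitriangularOfSuperdiag (v : Fin m → R) : unitriangular R (m + 1) :=
  ⟨(isUnit_one_add_ofSuperdiag v).unit, by
    simpa [mem_unitriangular] using degreeGe_ofSuperdiag v⟩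

def superdiagHom : unitriangular R (m + 1) →* Multiplicative (Fin m → R) where
  toFun x := .ofAdd (superdiag ((x : GL (Fin (m + 1)) R).val - 1))
  map_one' := by simp
  map_mul' x y := by
    rw [Subgroup.coe_mul, val_mul_sub_one, map_add superdiag, map_add superdiag,
      superdiag_eq_zero ((mem_unitriangular.mp x.2).mul (mem_unitriangular.mp y.2)), zero_add,
      ofAdd_add]

lemma superdiagHom_unitriangularOfSuperdiag (v : Fin m → R) :
    superdiagHom (unitriangularOfSuperdiag v) = .ofAdd v := by
  simp [superdiagHom, unitriangularOfSuperdiag, superdiag_ofSuperdiag]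

def lieTriple (a b c : Fin 6 → R) (p : Fin 6) : R :=
  (a p * b (p + 1) - b p * a (p + 1)) * c (p + 2) -
    c p * (a (p + 1) * b (p + 2) - b (p + 1) * a (p + 2))

lemma n21Lie_apply_zero_six {A : Fin 6 → Matrix (Fin 7) (Fin 7) R}
    (hA : ∀ i, DegreeGe 1 (A i)) :
    n21Lie A 0 6 =
      lieTriple (superdiag (A 0)) (superdiag (A 1)) (superdiag (A 2)) 0 *
        lieTriple (superdiag (A 3)) (superdiag (A 4)) (superdiag (A 5)) 3 -
      lieTriple (superdiag (A 3)) (superdiag (A 4)) (superdiag (A 5)) 0 *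
        lieTriple (superdiag (A 0)) (superdiag (A 1)) (superdiag (A 2)) 3 := by
  have h3 i j k : DegreeGe 3 ⁅⁅A i, A j⁆, A k⁆ := ((hA i).lie (hA j)).lie (hA k)
  have first (a b c : Fin 6) :=
    lie_lie_apply (hA a) (hA b) (hA c) (i := 0) (j := 1) (k := 2) (l := 3) rfl rfl rfl
  have second (a b c : Fin 6) :=
    lie_lie_apply (hA a) (hA b) (hA c) (i := 3) (j := 4) (k := 5) (l := 6) rfl rfl rfl
  rw [n21Lie, lie_apply_of_degreeGe_three (h3 0 1 2) (h3 3 4 5) (i := 0) (j := 3) (l := 6) rfl rfl,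
    first, first, second, second]
  rfl

end Unitriangular

section CoverGroup

variable {ι : Type} {n : ι → ℕ} (τ : ι → ι) (hτ : ∀ c, n c ∣ n (τ c))

def superdiagPattern : ZModPi n →+ (Fin 6 → ZModPi n) :=
  AddMonoidHom.mk' (fun ξ p c =>
      ![ξ c, ZMod.castHom (hτ c) _ (ξ (τ c)), ZMod.castHom (hτ c) _ (ξ (τ c)),
        ZMod.castHom (hτ c) _ (ξ (τ c)), ξ c, ξ c] p)
    fun ξ η => by funext p c; fin_cases p <;> simp [ZMod.cast_add (hτ c)]

def coverGroup : Subgroup (Multiplicative (ZModPi n) × unitriangular (ZModPi n) 7) :=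
  MonoidHom.eqLocus ((superdiagPattern τ hτ).toMultiplicative.comp (MonoidHom.fst _ _))
    (superdiagHom.comp (MonoidHom.snd _ _))

def coverProj : coverGroup τ hτ →* Multiplicative (ZModPi n) :=
  (MonoidHom.fst _ _).comp (coverGroup τ hτ).subtype

def coverMatrix : coverGroup τ hτ →* GL (Fin 7) (ZModPi n) :=
  (unitriangular _ 7).subtype.comp ((MonoidHom.snd _ _).comp (coverGroup τ hτ).subtype)

noncomputable def coverLift (ξ : ZModPi n) : coverGroup τ hτ :=
  ⟨(.ofAdd ξ, unitriangularOfSuperdiag (superdiagPattern τ hτ ξ)),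
    (superdiagHom_unitriangularOfSuperdiag _).symm⟩

variable {τ hτ}

lemma coverProj_surjective : Function.Surjective (coverProj τ hτ) :=
  fun ξ => ⟨coverLift τ hτ ξ.toAdd, rfl⟩

lemma degreeGe_coverMatrix (w : coverGroup τ hτ) : DegreeGe 1 ((coverMatrix τ hτ w).val - 1) :=
  w.1.2.2

lemma superdiag_coverMatrix (w : coverGroup τ hτ) :
    superdiag ((coverMatrix τ hτ w).val - 1) =
      superdiagPattern τ hτ (coverProj τ hτ w).toAdd :=
  congrArg Multiplicative.toAdd w.2.symm

lemma n21W_coverGroup_ext {g g' : Fin 6 → coverGroup τ hτ}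
    (h : (n21W (coverMatrix τ hτ ∘ g)).val = (n21W (coverMatrix τ hτ ∘ g')).val) :
    n21W g = n21W g' := by
  refine Subtype.ext (Prod.ext ?_ (Subtype.ext ?_))
  · change coverProj τ hτ (n21W g) = coverProj τ hτ (n21W g')
    simp only [map_n21W, n21W_eq_one]
  · change coverMatrix τ hτ (n21W g) = coverMatrix τ hτ (n21W g')
    rw [map_n21W, map_n21W]
    exact Units.ext h

lemma mem_n21MarginalSet_of_coverProj_eq_one {a : coverGroup τ hτ} (ha : coverProj τ hτ a = 1) :
    a ∈ n21MarginalSet (coverGroup τ hτ) := by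
  intro g i
  have hδ : DegreeGe 2 ((coverMatrix τ hτ a).val - 1) :=
    degreeGe_two_of_superdiag_eq_zero (degreeGe_coverMatrix a)
      (by rw [superdiag_coverMatrix, ha, toAdd_one, map_zero])
  have hlead j : IsLeadingTerm 1 (coverMatrix τ hτ (Function.update g i (g i * a) j))
      ((coverMatrix τ hτ (g j)).val - 1) := by
    rcases eq_or_ne j i with rfl | hj
    · simpa using isLeadingTerm_mul (degreeGe_coverMatrix (g j)) hδ
    · simpa [Function.update_of_ne hj] using isLeadingTerm_self (degreeGe_coverMatrix (g j))
  refine n21W_coverGroup_ext ?_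
  rw [val_n21W (g := coverMatrix τ hτ ∘ _) hlead,
    val_n21W (g := coverMatrix τ hτ ∘ g) fun j =>
      isLeadingTerm_self (degreeGe_coverMatrix (g j))]
  rfl

lemma coverProj_eq_one_of_mem_n21MarginalSet (hτne : ∀ c, τ c ≠ c) {a : coverGroup τ hτ}
    (ha : a ∈ n21MarginalSet (coverGroup τ hτ)) : coverProj τ hτ a = 1 := by
  classical
  suffices (coverProj τ hτ a).toAdd = 0 by simpa using congrArg Multiplicative.ofAdd this
  funext c
  let e c' := coverLift τ hτ (Pi.single c' 1)
  let g : Fin 6 → coverGroup τ hτ := ![a, e (τ c), e (τ c), e (τ c), e c, e c]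
  have hv : n21W g = 1 := by
    simpa [n21W, g] using ha ![1, e (τ c), e (τ c), e (τ c), e c, e c] 0
  have hA j := degreeGe_coverMatrix (g j)
  have hzero := val_n21W (g := coverMatrix τ hτ ∘ g) fun j => isLeadingTerm_self (hA j)
  rw [← map_n21W, hv, map_one, Units.val_one, left_eq_add] at hzero
  simp only [Function.comp_apply] at hzero
  have hcorner := congrFun (congrFun (congrFun hzero 0) 6) c
  rw [n21Lie_apply_zero_six hA] at hcorner
  simp only [superdiag_coverMatrix] at hcorner
  simpa [g, e, coverLift, coverProj, superdiagPattern, lieTriple, hτne c, (hτne c).symm,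
    ZMod.cast_one (hτ c)] using hcorner

end CoverGroup

lemma IsN21Capable.of_mulEquiv {G G' : Type} [Group G] [Group G'] (e : G ≃* G')
    (h : IsN21Capable G') : IsN21Capable G := by
  obtain ⟨E, _, H, hH, hset, ⟨μ⟩⟩ := h
  exact ⟨E, _, H, hH, hset, ⟨e.trans μ⟩⟩

theorem isN21Capable_pi {ι : Type} {n : ι → ℕ} (τ : ι → ι) (hτne : ∀ c, τ c ≠ c)
    (hτ : ∀ c, n c ∣ n (τ c)) : IsN21Capable (Multiplicative (ZModPi n)) :=
  ⟨coverGroup τ hτ, inferInstance, (coverProj τ hτ).ker, inferInstance,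
    Set.ext fun _ => ⟨mem_n21MarginalSet_of_coverProj_eq_one,
      coverProj_eq_one_of_mem_n21MarginalSet hτne⟩,
    ⟨(QuotientGroup.quotientKerEquivOfSurjective _ coverProj_surjective).symm⟩⟩

lemma dvd_of_le_of_succ_dvd {k : ℕ} {n : Fin k → ℕ}
    (hdvd : ∀ i : Fin k, ∀ h : (i : ℕ) + 1 < k, n ⟨(i : ℕ) + 1, h⟩ ∣ n i) {i j : Fin k}
    (hij : (i : ℕ) ≤ j) : n j ∣ n i := by
  obtain ⟨j, hj⟩ := j
  induction j with
  | zero => rw [show i = ⟨0, hj⟩ from Fin.ext (Nat.le_zero.mp hij)]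
  | succ j ih =>
    rcases (Nat.lt_or_eq_of_le hij) with h | h
    · exact (hdvd ⟨j, by omega⟩ hj).trans (ih (by omega) (by simp only at h ⊢; omega))
    · rw [show i = ⟨j + 1, hj⟩ from Fin.ext h]

/-- A finite abelian group `ℤ_{n_1} ⊕ … ⊕ ℤ_{n_k}` (with `k ≥ 1`, each `n_i ≥ 2`,
`n_{i+1} ∣ n_i`) is `N_{2,1}`-capable if and only if `k ≥ 2` and `n_1 = n_2`. -/
theorem n21Capable_finite_abelian_iff (G : Type) [Group G]
    (k : ℕ) (hk : 1 ≤ k) (n : Fin k → ℕ)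
    (hn : ∀ i : Fin k, 2 ≤ n i)
    (hdvd : ∀ i : Fin k, ∀ h : (i : ℕ) + 1 < k, n ⟨(i : ℕ) + 1, h⟩ ∣ n i)
    (hG : Nonempty (G ≃* Multiplicative ((i : Fin k) → ZMod (n i)))) :
    IsN21Capable G ↔ ∃ h : 2 ≤ k, n ⟨0, by omega⟩ = n ⟨1, by omega⟩ := by
  obtain ⟨φ⟩ := hG
  have hchain {i j : Fin k} (hij : (i : ℕ) ≤ j) : n j ∣ n i := dvd_of_le_of_succ_dvd hdvd hij
  constructor
  · intro hcap
    replace hcap := hcap.of_mulEquiv φ.symm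
    by_cases hk2 : 2 ≤ k
    · refine ⟨hk2, Nat.dvd_antisymm (dvd_of_isN21Capable_pi hcap _ fun c hc => hchain ?_)
        (hchain zero_le_one)⟩
      exact Nat.one_le_iff_ne_zero.mpr fun h => hc (Fin.ext h)
    · have h1 := dvd_of_isN21Capable_pi hcap ⟨0, hk⟩ (m := 1)
        fun c hc => absurd (Fin.ext (by omega)) hc
      have := Nat.le_of_dvd one_pos h1
      have := hn ⟨0, hk⟩
      omega
  · rintro ⟨hk2, h01⟩
    refine (isN21Capable_pi (n := n) (fun c => if (c : ℕ) = 0 then ⟨1, hk2⟩ else ⟨0, hk⟩)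
      (fun c => ?_) (fun c => ?_)).of_mulEquiv φ
    · split_ifs with h <;> simp [Fin.ext_iff] <;> omega
    · split_ifs with h
      · rw [show c = ⟨0, hk⟩ from Fin.ext h, ← h01]
      · exact hchain (Nat.zero_le _)
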